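/- Let q, q̃ : ℝ → ℂ be differentiable and nonvanishing on a set Ω, with polar forms q = r e^{iθ}, q̃ = r̃ e^{iθ̃}, and let φ = θ̃ − θ. Suppose for some 0 < σ < 1/2 and constants D, M > 0: |q̃' − q'| ≤ Dσ, |r − r̃|/r ≤ σ, |φ| ≤ σ, |q'| ≤ D, r ≥ M, and r̃ ≥ M/2. Then |φ'| ≤ 5(D/M)σ on Ω. -/

import Mathlib

/-!
For a polar form `q = r e^{iθ}` with `r ≠ 0` one has `θ' = Im (q'/q)`, so
`φ' = Im (q̃'/q̃ - q'/q)`. Writing `q̃'/q̃ - q'/q = (q̃' - q')/q̃ + q'(q - q̃)/(q q̃)` and using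
`|q - q̃| ≤ |r - r̃| + r̃ |φ| ≤ σ (r + r̃)` gives `|φ'| ≤ 2Dσ/r̃ + Dσ/r ≤ 5Dσ/M`.
-/

open Complex

theorem norm_ofReal_mul_exp_sub_le (r₁ r₂ θ₁ θ₂ : ℝ) :
    ‖(r₁ : ℂ) * exp (θ₁ * I) - r₂ * exp (θ₂ * I)‖ ≤ |r₁ - r₂| + |r₂| * |θ₁ - θ₂| := by
  have hsplit : (r₁ : ℂ) * exp (θ₁ * I) - r₂ * exp (θ₂ * I)
      = ((r₁ - r₂ : ℝ) : ℂ) * exp (θ₁ * I) + r₂ * exp (θ₂ * I) * (exp (I * (θ₁ - θ₂ : ℝ)) - 1) := by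
    rw [mul_sub, mul_assoc, ← exp_add]
    push_cast
    ring_nf
  calc _ ≤ ‖((r₁ - r₂ : ℝ) : ℂ) * exp (θ₁ * I)‖
          + ‖(r₂ : ℂ) * exp (θ₂ * I) * (exp (I * (θ₁ - θ₂ : ℝ)) - 1)‖ :=
        hsplit ▸ norm_add_le _ _
    _ ≤ |r₁ - r₂| + |r₂| * |θ₁ - θ₂| := by
        simp only [norm_mul, norm_exp_ofReal_mul_I, norm_real, Real.norm_eq_abs, mul_one]
        gcongr
        exact Real.norm_exp_I_mul_ofReal_sub_one_le

theorem norm_div_sub_div_le {𝕜 : Type*} [NormedField 𝕜] {a b a' b' : 𝕜}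
    (ha : a ≠ 0) (hb : b ≠ 0) :
    ‖b' / b - a' / a‖ ≤ ‖b' - a'‖ / ‖b‖ + ‖a'‖ * ‖a - b‖ / (‖a‖ * ‖b‖) := by
  have hsplit : b' / b - a' / a = (b' - a') / b + a' * (a - b) / (a * b) := by
    field_simp
    ring
  rw [hsplit]
  simpa only [norm_div, norm_mul] using norm_add_le ((b' - a') / b) (a' * (a - b) / (a * b))

theorem im_logDeriv_eq_deriv_of_polar {q : ℝ → ℂ} {r θ : ℝ → ℝ} {x : ℝ}
    (hpolar : ∀ y, q y = r y * exp (θ y * I)) (hq : DifferentiableAt ℝ q x)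
    (hθ : DifferentiableAt ℝ θ x) (hr : r x ≠ 0) :
    (logDeriv q x).im = deriv θ x := by
  have hr_eq : r = fun y => (q y * exp (-(θ y * I))).re := by
    funext y
    simp [hpolar, mul_assoc, ← exp_add]
  have hr_diff : DifferentiableAt ℝ r x := by
    rw [hr_eq]
    exact reCLM.differentiableAt.comp x
      (hq.mul (hθ.hasDerivAt.ofReal_comp.mul_const I).neg.cexp.differentiableAt)
  have hq_deriv : HasDerivAt q
      (deriv r x * exp (θ x * I) + r x * (exp (θ x * I) * (deriv θ x * I))) x := by
    rw [show q = fun y => (r y : ℂ) * exp (θ y * I) from funext hpolar]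
    exact hr_diff.hasDerivAt.ofReal_comp.mul (hθ.hasDerivAt.ofReal_comp.mul_const I).cexp
  have hlog : logDeriv q x = ((deriv r x / r x : ℝ) : ℂ) + deriv θ x * I := by
    rw [logDeriv_apply, hq_deriv.deriv, hpolar]
    have : (r x : ℂ) ≠ 0 := ofReal_ne_zero.mpr hr
    push_cast
    field_simp
  simp [hlog]

theorem phase_derivative_noise_bound_general
    (Ω : Set ℝ) (q qt : ℝ → ℂ) (r rt θ θt : ℝ → ℝ)
    (hqd : Differentiable ℝ q) (hqtd : Differentiable ℝ qt)
    (hθd : Differentiable ℝ θ) (hθtd : Differentiable ℝ θt)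
    (hpolar : ∀ ω, q ω = (r ω : ℂ) * Complex.exp ((θ ω : ℂ) * Complex.I))
    (hpolart : ∀ ω, qt ω = (rt ω : ℂ) * Complex.exp ((θt ω : ℂ) * Complex.I))
    (φ : ℝ → ℝ) (hφ : φ = fun ω => θt ω - θ ω)
    (σ D M : ℝ) (hM : 0 < M)
    (h1 : ∀ ω ∈ Ω, ‖deriv qt ω - deriv q ω‖ ≤ D * σ)
    (h2 : ∀ ω ∈ Ω, |r ω - rt ω| / r ω ≤ σ)
    (h3 : ∀ ω ∈ Ω, |φ ω| ≤ σ)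
    (h4 : ∀ ω ∈ Ω, ‖deriv q ω‖ ≤ D)
    (h5 : ∀ ω ∈ Ω, M ≤ r ω)
    (h6 : ∀ ω ∈ Ω, M / 2 ≤ rt ω) :
    ∀ ω ∈ Ω, |deriv φ ω| ≤ 5 * (D / M) * σ := by
  intro ω hω
  have hr : 0 < r ω := hM.trans_le (h5 ω hω)
  have hrt : 0 < rt ω := (half_pos hM).trans_le (h6 ω hω)
  have hσ : 0 ≤ σ := (abs_nonneg _).trans (h3 ω hω)
  have hD : 0 ≤ D := (norm_nonneg _).trans (h4 ω hω)
  have hnorm : ‖q ω‖ = r ω := by simp [hpolar, abs_of_pos hr]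
  have hnormt : ‖qt ω‖ = rt ω := by simp [hpolart, abs_of_pos hrt]
  have hdist : ‖q ω - qt ω‖ ≤ σ * r ω + rt ω * σ := by
    have hφω : |θ ω - θt ω| ≤ σ := by simpa [hφ, abs_sub_comm] using h3 ω hω
    have hrω : |r ω - rt ω| ≤ σ * r ω := (div_le_iff₀ hr).mp (h2 ω hω)
    calc _ ≤ |r ω - rt ω| + |rt ω| * |θ ω - θt ω| := by
          rw [hpolar, hpolart]; exact norm_ofReal_mul_exp_sub_le _ _ _ _
      _ ≤ σ * r ω + rt ω * σ := by rw [abs_of_pos hrt]; gcongr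
  have hφ_deriv : deriv φ ω = (logDeriv qt ω - logDeriv q ω).im := by
    rw [hφ, deriv_fun_sub (hθtd ω) (hθd ω), sub_im,
      im_logDeriv_eq_deriv_of_polar hpolar (hqd ω) (hθd ω) hr.ne',
      im_logDeriv_eq_deriv_of_polar hpolart (hqtd ω) (hθtd ω) hrt.ne']
  calc |deriv φ ω| ≤ ‖logDeriv qt ω - logDeriv q ω‖ := hφ_deriv ▸ abs_im_le_norm _
    _ ≤ ‖deriv qt ω - deriv q ω‖ / ‖qt ω‖ + ‖deriv q ω‖ * ‖q ω - qt ω‖ / (‖q ω‖ * ‖qt ω‖) :=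
        norm_div_sub_div_le (norm_pos_iff.mp (hnorm ▸ hr)) (norm_pos_iff.mp (hnormt ▸ hrt))
    _ ≤ D * σ / rt ω + D * (σ * r ω + rt ω * σ) / (r ω * rt ω) := by
        rw [hnorm, hnormt]
        gcongr
        exacts [h1 ω hω, h4 ω hω]
    _ = D * σ * (2 / rt ω + 1 / r ω) := by field_simp; ring
    _ ≤ D * σ * (2 / (M / 2) + 1 / M) := by
        gcongr
        exacts [h6 ω hω, h5 ω hω]
    _ = 5 * (D / M) * σ := by field_simp; ring

theorem phase_derivative_noise_bound
    (Ω : Set ℝ) (q qt : ℝ → ℂ) (r rt θ θt : ℝ → ℝ)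
    (hq : ∀ ω ∈ Ω, q ω ≠ 0) (hqt : ∀ ω ∈ Ω, qt ω ≠ 0)
    (hqd : Differentiable ℝ q) (hqtd : Differentiable ℝ qt)
    (hθd : Differentiable ℝ θ) (hθtd : Differentiable ℝ θt)
    (hpolar : ∀ ω, q ω = (r ω : ℂ) * Complex.exp ((θ ω : ℂ) * Complex.I))
    (hpolart : ∀ ω, qt ω = (rt ω : ℂ) * Complex.exp ((θt ω : ℂ) * Complex.I))
    (φ : ℝ → ℝ) (hφ : φ = fun ω => θt ω - θ ω)
    (σ D M : ℝ) (hσ : 0 < σ) (hσ2 : σ < 1/2) (hD : 0 < D) (hM : 0 < M)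
    (h1 : ∀ ω ∈ Ω, ‖deriv qt ω - deriv q ω‖ ≤ D * σ)
    (h2 : ∀ ω ∈ Ω, |r ω - rt ω| / r ω ≤ σ)
    (h3 : ∀ ω ∈ Ω, |φ ω| ≤ σ)
    (h4 : ∀ ω ∈ Ω, ‖deriv q ω‖ ≤ D)
    (h5 : ∀ ω ∈ Ω, M ≤ r ω)
    (h6 : ∀ ω ∈ Ω, M / 2 ≤ rt ω) :
    ∀ ω ∈ Ω, |deriv φ ω| ≤ 5 * (D / M) * σ :=
  phase_derivative_noise_bound_general Ω q qt r rt θ θt hqd hqtd hθd hθtd hpolar hpolart φ hφ σ D M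
    hM h1 h2 h3 h4 h5 h6
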